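/- (Proposition 2.1(i), W_μ is a neighbourhood of 0: quantitative form.) Let u ∈ 𝒞(Ω) satisfy 0 < A(u) < ((N − μ + 2)/(2N − μ)) · S_{H,L}^{(2N−μ)/(N−μ+2)}. Then I_μ(u) > 0 and J_μ(u) < m_μ, i.e. u belongs to the stable set W_μ. -/

import Mathlib

open MeasureTheory

noncomputable section

/-- The set of continuously differentiable functions with compact support contained in `Ω`. -/
def testFuns (N : ℕ) (Ω : Set (EuclideanSpace ℝ (Fin N))) :
    Set (EuclideanSpace ℝ (Fin N) → ℝ) :=
  {u | ContDiff ℝ 1 u ∧ HasCompactSupport u ∧ tsupport u ⊆ Ω}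

/-- Dirichlet energy `A(u) = ∫ ‖∇u‖²`. -/
def Afun (N : ℕ) (u : EuclideanSpace ℝ (Fin N) → ℝ) : ℝ :=
  ∫ x, ‖fderiv ℝ u x‖ ^ 2

/-- Nonlocal Hartree-type energy `B(u)`. -/
def Bfun (N : ℕ) (μ : ℝ) (u : EuclideanSpace ℝ (Fin N) → ℝ) : ℝ :=
  ∫ x, ∫ y, |u x| ^ ((2 * (N : ℝ) - μ) / ((N : ℝ) - 2)) *
    |u y| ^ ((2 * (N : ℝ) - μ) / ((N : ℝ) - 2)) * ‖x - y‖ ^ (-μ)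

/-- The energy functional `J_μ`. -/
def Jfun (N : ℕ) (μ : ℝ) (u : EuclideanSpace ℝ (Fin N) → ℝ) : ℝ :=
  (1 / 2) * Afun N u - (1 / (2 * ((2 * (N : ℝ) - μ) / ((N : ℝ) - 2)))) * Bfun N μ u

/-- The Nehari functional `I_μ`. -/
def Ifun (N : ℕ) (μ : ℝ) (u : EuclideanSpace ℝ (Fin N) → ℝ) : ℝ :=
  Afun N u - Bfun N μ u

/-- The best constant `S_{H,L}`. -/
def SHL (N : ℕ) (μ : ℝ) (Ω : Set (EuclideanSpace ℝ (Fin N))) : ℝ :=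
  sInf {c : ℝ | ∃ u ∈ testFuns N Ω, 0 < Bfun N μ u ∧
    c = Afun N u / (Bfun N μ u) ^ (((N : ℝ) - 2) / (2 * (N : ℝ) - μ))}

/-- The critical level `m_μ`. -/
def mlevel (N : ℕ) (μ : ℝ) (Ω : Set (EuclideanSpace ℝ (Fin N))) : ℝ :=
  (((N : ℝ) - μ + 2) / (2 * (2 * (N : ℝ) - μ))) *
    SHL N μ Ω ^ ((2 * (N : ℝ) - μ) / ((N : ℝ) - μ + 2))

end

/-!
Rescaling the Sobolev-type inequality `S_{H,L} · B(u)^t ≤ A(u)`, with `t = (N-2)/(2N-μ)`, shows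
that `B(u) ≥ A(u) > 0` would force `S_{H,L}^{1/(1-t)} ≤ A(u)`. Since `1/(1-t)` is the exponent
`(2N-μ)/(N-μ+2)` of the hypothesis and its coefficient is `< 1`, this is excluded, so `I_μ(u) > 0`.
The bound on `J_μ` only needs `B(u) ≥ 0`, as `2 m_μ` is exactly the upper bound assumed on `A(u)`.
-/

open Real

lemma lt_of_mul_rpow_le_of_lt_rpow {A B S t : ℝ} (hA : 0 < A) (hS : 0 ≤ S) (ht0 : 0 ≤ t)
    (ht1 : t < 1) (hSob : 0 < B → S * B ^ t ≤ A) (hcrit : A < S ^ (1 - t)⁻¹) : B < A := by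
  by_contra! hAB
  have hS_le : S ≤ A ^ (1 - t) := by
    have hSAt : S * A ^ t ≤ A := calc
      S * A ^ t ≤ S * B ^ t := by gcongr
      _ ≤ A := hSob (hA.trans_le hAB)
    rwa [rpow_sub hA, rpow_one, le_div_iff₀ (rpow_pos_of_pos hA t)]
  have : S ^ (1 - t)⁻¹ ≤ A := by
    calc S ^ (1 - t)⁻¹ ≤ (A ^ (1 - t)) ^ (1 - t)⁻¹ := by gcongr
      _ = A := by rw [← rpow_mul hA.le, mul_inv_cancel₀ (by linarith), rpow_one]
  linarith

lemma Afun_nonneg (N : ℕ) (u : EuclideanSpace ℝ (Fin N) → ℝ) : 0 ≤ Afun N u :=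
  integral_nonneg fun _ ↦ by positivity

lemma Bfun_nonneg (N : ℕ) (μ : ℝ) (u : EuclideanSpace ℝ (Fin N) → ℝ) : 0 ≤ Bfun N μ u :=
  integral_nonneg fun _ ↦ integral_nonneg fun _ ↦ by positivity

lemma Afun_div_Bfun_rpow_nonneg (N : ℕ) (μ t : ℝ) (u : EuclideanSpace ℝ (Fin N) → ℝ) :
    0 ≤ Afun N u / Bfun N μ u ^ t :=
  div_nonneg (Afun_nonneg N u) (rpow_nonneg (Bfun_nonneg N μ u) t)

lemma SHL_nonneg (N : ℕ) (μ : ℝ) (Ω : Set (EuclideanSpace ℝ (Fin N))) : 0 ≤ SHL N μ Ω :=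
  Real.sInf_nonneg <| by
    rintro _ ⟨v, -, -, rfl⟩
    exact Afun_div_Bfun_rpow_nonneg N μ _ v

lemma SHL_mul_Bfun_rpow_le_Afun {N : ℕ} {μ : ℝ} {Ω : Set (EuclideanSpace ℝ (Fin N))}
    {u : EuclideanSpace ℝ (Fin N) → ℝ} (hu : u ∈ testFuns N Ω) (hB : 0 < Bfun N μ u) :
    SHL N μ Ω * Bfun N μ u ^ (((N : ℝ) - 2) / (2 * (N : ℝ) - μ)) ≤ Afun N u := by
  have hbdd : BddBelow {c : ℝ | ∃ v ∈ testFuns N Ω, 0 < Bfun N μ v ∧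
      c = Afun N v / Bfun N μ v ^ (((N : ℝ) - 2) / (2 * (N : ℝ) - μ))} := by
    refine ⟨0, ?_⟩
    rintro _ ⟨v, -, -, rfl⟩
    exact Afun_div_Bfun_rpow_nonneg N μ _ v
  rw [← le_div_iff₀ (rpow_pos_of_pos hB _)]
  exact csInf_le hbdd ⟨u, hu, hB, rfl⟩

lemma Jfun_le_half_Afun {N : ℕ} {μ : ℝ} (hN : 2 ≤ N) (hμ : μ ≤ 2 * N)
    (u : EuclideanSpace ℝ (Fin N) → ℝ) : Jfun N μ u ≤ Afun N u / 2 := by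
  have hN' : (0 : ℝ) ≤ N - 2 := by
    have : (2 : ℝ) ≤ N := by exact_mod_cast hN
    linarith
  have hcoef : 0 ≤ 1 / (2 * ((2 * (N : ℝ) - μ) / ((N : ℝ) - 2))) := by
    have : 0 ≤ 2 * (N : ℝ) - μ := by linarith
    positivity
  have := mul_nonneg hcoef (Bfun_nonneg N μ u)
  rw [Jfun]
  linarith

lemma two_mul_mlevel {N : ℕ} {μ : ℝ} (hμ : μ ≠ 2 * N) (Ω : Set (EuclideanSpace ℝ (Fin N))) :
    2 * mlevel N μ Ω = (((N : ℝ) - μ + 2) / (2 * (N : ℝ) - μ)) *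
      SHL N μ Ω ^ ((2 * (N : ℝ) - μ) / ((N : ℝ) - μ + 2)) := by
  have : 2 * (N : ℝ) - μ ≠ 0 := sub_ne_zero.2 hμ.symm
  rw [mlevel]
  field_simp

theorem stable_set_neighbourhood_general
    (N : ℕ) (hN : 3 ≤ N) (μ : ℝ) (hμN : μ < (N : ℝ))
    (Ω : Set (EuclideanSpace ℝ (Fin N)))
    (u : EuclideanSpace ℝ (Fin N) → ℝ) (hu : u ∈ testFuns N Ω)
    (hA0 : 0 < Afun N u)
    (hA : Afun N u < (((N : ℝ) - μ + 2) / (2 * (N : ℝ) - μ)) *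
      SHL N μ Ω ^ ((2 * (N : ℝ) - μ) / ((N : ℝ) - μ + 2))) :
    0 < Ifun N μ u ∧ Jfun N μ u < mlevel N μ Ω := by
  have hN3 : (3 : ℝ) ≤ N := by exact_mod_cast hN
  have h2Nμ : 0 < 2 * (N : ℝ) - μ := by linarith
  have hc0 : 0 < ((N : ℝ) - μ + 2) / (2 * (N : ℝ) - μ) := div_pos (by linarith) h2Nμ
  have hc1 : ((N : ℝ) - μ + 2) / (2 * (N : ℝ) - μ) < 1 := (div_lt_one h2Nμ).2 (by linarith)
  have hexp : (1 - ((N : ℝ) - 2) / (2 * (N : ℝ) - μ))⁻¹ =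
      (2 * (N : ℝ) - μ) / ((N : ℝ) - μ + 2) := by
    rw [one_sub_div h2Nμ.ne', inv_div]
    ring_nf
  refine ⟨sub_pos.2 ?_, ?_⟩
  · refine lt_of_mul_rpow_le_of_lt_rpow hA0 (SHL_nonneg N μ Ω) (div_nonneg (by linarith) h2Nμ.le)
      ((div_lt_one h2Nμ).2 (by linarith)) (SHL_mul_Bfun_rpow_le_Afun hu) ?_
    rw [hexp]
    nlinarith
  · have hJ := Jfun_le_half_Afun (μ := μ) (by omega) (by linarith) u
    have hm := two_mul_mlevel (by linarith : μ ≠ 2 * N) Ω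
    linarith

/-- Proposition 2.1(i): `W_μ` is a neighbourhood of `0`, quantitative form. -/
theorem stable_set_neighbourhood
    (N : ℕ) (hN : 3 ≤ N) (μ : ℝ) (hμ0 : 0 < μ) (hμN : μ < (N : ℝ))
    (Ω : Set (EuclideanSpace ℝ (Fin N))) (hΩo : IsOpen Ω) (hΩne : Ω.Nonempty)
    (u : EuclideanSpace ℝ (Fin N) → ℝ) (hu : u ∈ testFuns N Ω)
    (hA0 : 0 < Afun N u)
    (hA : Afun N u < (((N : ℝ) - μ + 2) / (2 * (N : ℝ) - μ)) *
      SHL N μ Ω ^ ((2 * (N : ℝ) - μ) / ((N : ℝ) - μ + 2))) :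
    0 < Ifun N μ u ∧ Jfun N μ u < mlevel N μ Ω :=
  stable_set_neighbourhood_general N hN μ hμN Ω u hu hA0 hA
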